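/- Let Γ = (G, σ) be a balanced signed graph on n vertices, let Γ̄_σ be its signed complement (with respect to a diagonal ±1 matrix S witnessing balance), let 1 ≤ k ≤ n−1, and set N = C(n,k). Then there exist enumerations (x_1, …, x_N) of the Laplacian eigenvalues of F_k(Γ) with multiplicity and (y_1, …, y_N) of the Laplacian eigenvalues of F_k(Γ̄_σ) with multiplicity such that the multiset {x_i + y_i : i = 1, …, N} is exactly the multiset of Laplacian eigenvalues of the Johnson graph J(n, k) = F_k(K_n); that is, every Laplacian eigenvalue of the Johnson graph is the sum of one eigenvalue of F_k(Γ) and one of F_k(Γ̄_σ), each eigenvalue being used exactly once. -/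

import Mathlib

open scoped Classical

/-- A signed graph: a simple graph together with a signature assigning a sign `±1`
(an element of `ℤˣ`) to each pair of vertices (only the values on edges are relevant). -/
structure SignedGraph (V : Type*) where
  G : SimpleGraph V
  sign : V → V → ℤˣ
  sign_symm : ∀ u v, sign u v = sign v u

namespace SignedGraph

variable {V W : Type*}

/-- The sign function, as a function on unordered pairs. -/
def esign (Γ : SignedGraph V) : Sym2 V → ℤˣ :=
  Sym2.lift ⟨Γ.sign, Γ.sign_symm⟩

/-- The sign of a walk: the product of the signs of its edges. -/
def walkSign (Γ : SignedGraph V) {u v : V} (p : Γ.G.Walk u v) : ℤˣ :=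
  (p.edges.map Γ.esign).prod

/-- A signed graph is balanced if every cycle is positive. -/
def Balanced (Γ : SignedGraph V) : Prop :=
  ∀ ⦃u : V⦄ (p : Γ.G.Walk u u), p.IsCycle → Γ.walkSign p = 1

/-- Switching at a vertex subset `U`: reverse the sign of every edge with exactly one
endpoint in `U`. -/
noncomputable def switch (Γ : SignedGraph V) (U : Set V) : SignedGraph V where
  G := Γ.G
  sign u v := (if u ∈ U then (-1 : ℤˣ) else 1) * (if v ∈ U then (-1 : ℤˣ) else 1) * Γ.sign u v
  sign_symm u v := by
    rw [Γ.sign_symm u v, mul_comm (if u ∈ U then (-1 : ℤˣ) else 1) (if v ∈ U then (-1 : ℤˣ) else 1)]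

/-- Two signed graphs on the same vertex set are "the same signed graph" when they have the
same underlying graph and the same signature on every edge. -/
def SEq (Γ Γ' : SignedGraph V) : Prop :=
  Γ.G = Γ'.G ∧ ∀ u v, Γ.G.Adj u v → Γ.sign u v = Γ'.sign u v

/-- Switching equivalence of two signed graphs on the same vertex set. -/
def SwitchEquiv (Γ Γ' : SignedGraph V) : Prop :=
  ∃ U : Set V, (Γ.switch U).SEq Γ'

/-- A sign-preserving isomorphism of signed graphs. -/
structure Iso (Γ : SignedGraph V) (Γ' : SignedGraph W) where
  toEquiv : V ≃ W
  adj_iff : ∀ u v, Γ.G.Adj u v ↔ Γ'.G.Adj (toEquiv u) (toEquiv v)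
  sign_eq : ∀ u v, Γ.G.Adj u v → Γ.sign u v = Γ'.sign (toEquiv u) (toEquiv v)

/-- Switching isomorphism: `Γ'` is isomorphic to a switching of `Γ`. -/
def SwitchIso (Γ : SignedGraph V) (Γ' : SignedGraph W) : Prop :=
  ∃ U : Set V, Nonempty ((Γ.switch U).Iso Γ')

/-- The negation of a signed graph: all edge signs reversed. -/
def neg (Γ : SignedGraph V) : SignedGraph V where
  G := Γ.G
  sign u v := -Γ.sign u v
  sign_symm u v := by rw [Γ.sign_symm]

variable [DecidableEq V]

/-- The underlying graph of the `k`-token graph: vertices are the `k`-subsets of `V`,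
with `A ~ B` when `A Δ B = {a, b}`, `a ∈ A`, `b ∈ B` and `a ~ b` in `G`. -/
def tokenAdj (G : SimpleGraph V) (k : ℕ) : SimpleGraph {A : Finset V // A.card = k} where
  Adj A B := ∃ a b, a ∈ A.1 ∧ b ∈ B.1 ∧ G.Adj a b ∧ symmDiff A.1 B.1 = {a, b}
  symm := by
    constructor
    rintro A B ⟨a, b, ha, hb, hab, hs⟩
    exact ⟨b, a, hb, ha, hab.symm, by rw [symmDiff_comm, hs, Finset.pair_comm]⟩
  loopless := by
    constructor
    rintro A ⟨a, b, ha, hb, hab, hs⟩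
    rw [symmDiff_self] at hs
    have h : a ∈ ({a, b} : Finset V) := Finset.mem_insert_self a {b}
    rw [← hs] at h
    simp at h

/-- The `k`-token signed graph: the edge obtained by moving a token along `ab`
carries the sign of `ab`. -/
def token (Γ : SignedGraph V) (k : ℕ) : SignedGraph {A : Finset V // A.card = k} where
  G := tokenAdj Γ.G k
  sign A B := ∏ a ∈ A.1 \ B.1, ∏ b ∈ B.1 \ A.1, Γ.sign a b
  sign_symm A B := by
    rw [Finset.prod_comm]
    exact Finset.prod_congr rfl fun b _ => Finset.prod_congr rfl fun a _ => Γ.sign_symm a b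

/-- The signed adjacency matrix (over `ℝ`). -/
noncomputable def adjMatrix (Γ : SignedGraph V) [Fintype V] : Matrix V V ℝ :=
  Matrix.of fun u v => if Γ.G.Adj u v then ((Γ.sign u v : ℤ) : ℝ) else 0

/-- The signed Laplacian matrix `L = D - A` (over `ℝ`). -/
noncomputable def lapMatrix (Γ : SignedGraph V) [Fintype V] : Matrix V V ℝ :=
  Matrix.diagonal (fun v => (Γ.G.degree v : ℝ)) - Γ.adjMatrix

/-- The quantity `ℓ_m(Γ)`. -/
noncomputable def ellm (Γ : SignedGraph V) [Fintype V] (m : ℕ) : ℝ :=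
  (∑ r ∈ Finset.range (m + 1),
      ((Γ.G.adjMatrix ℝ ^ r).trace - (Γ.adjMatrix ^ r).trace)) /
  (∑ r ∈ Finset.range (m + 1),
      ((Γ.G.adjMatrix ℝ ^ r).trace + |(Γ.adjMatrix ^ r).trace|))

/-- The unbalance level `ℓ(Γ) = max {ℓ_{n-1}(Γ), ℓ_n(Γ)}`. -/
noncomputable def unbalanceLevel (Γ : SignedGraph V) [Fintype V] : ℝ :=
  max (Γ.ellm (Fintype.card V - 1)) (Γ.ellm (Fintype.card V))

/-- The frustration index: the minimum number of negative edges whose deletion yields a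
balanced signed graph. -/
noncomputable def frustrationIndex (Γ : SignedGraph V) : ℕ :=
  sInf {m : ℕ | ∃ F : Finset (Sym2 V), F.card = m ∧ ↑F ⊆ Γ.G.edgeSet ∧
    (∀ e ∈ F, Γ.esign e = -1) ∧
    Balanced ⟨Γ.G.deleteEdges ↑F, Γ.sign, Γ.sign_symm⟩}

/-- The signed complement of a balanced signed graph, with respect to a switching function
`s` witnessing balance (`A_σ = S A S`): the signed graph on the complement graph with
adjacency matrix `S Ā S`, i.e. with sign `s u * s v` on each complement edge. -/
def scompl (Γ : SignedGraph V) (s : V → ℤˣ) : SignedGraph V where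
  G := Γ.Gᶜ
  sign u v := s u * s v
  sign_symm u v := mul_comm _ _

/-- The real diagonal `±1` matrix associated with `s : V → ℤˣ`. -/
noncomputable def diagS [Fintype V] (s : V → ℤˣ) : Matrix V V ℝ :=
  Matrix.diagonal fun v => ((s v : ℤ) : ℝ)

end SignedGraph

/-- The all-positive signed complete graph on `V`. -/
def allPos (V : Type*) : SignedGraph V := ⟨⊤, fun _ _ => 1, fun _ _ => rfl⟩

/-- The `(n; 1, k)`-binomial matrix. -/
noncomputable def binomB (V : Type*) [Fintype V] [DecidableEq V] (k : ℕ) :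
    Matrix {A : Finset V // A.card = k} V ℝ :=
  Matrix.of fun A v => if v ∈ A.1 then 1 else 0

/-- The `(n; k₁, k₂)`-binomial matrix. -/
noncomputable def binomB2 (V : Type*) [Fintype V] [DecidableEq V] (k₁ k₂ : ℕ) :
    Matrix {A : Finset V // A.card = k₂} {A : Finset V // A.card = k₁} ℝ :=
  Matrix.of fun A X => if X.1 ⊆ A.1 then 1 else 0

/-!
Write `L_G` for the (unsigned) Laplacian of `F_k(G)`. Since `Γ` and `Γ̄_σ` are both switchings of
all-positive signatures by the same `s`, the Laplacians of `F_k(Γ)` and `F_k(Γ̄_σ)` are conjugate to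
`L_G` and `L_Ḡ` by the diagonal `±1` matrix `S_k = diag(∏_{v ∈ A} s v)`, so they have the same
spectra. Moving a token along `ab` is the permutation `P_ab` of `k`-subsets induced by the
transposition `(a b)`, and `L_G = ∑_{ab ∈ E(G)} (1 - P_ab)`. Hence `L_G + L_Ḡ = L_{K_n}`, and
`L_{K_n}` commutes with every `P_ab` because conjugating by a permutation of `V` permutes the
transpositions. So `L_G` and `L_Ḡ` are commuting symmetric matrices; a common eigenbasis pairs
their eigenvalues so that the sums are the eigenvalues of `L_{K_n}`.
-/

open Finset Polynomial Module

theorem Int.cast_units_mul_self {R : Type*} [Ring R] (u : ℤˣ) : ((u : ℤ) : R) * (u : ℤ) = 1 := by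
  rw [← Int.cast_mul, Int.units_coe_mul_self, Int.cast_one]

theorem Sym2.toFinset_injective {α : Type*} [DecidableEq α] :
    Function.Injective (Sym2.toFinset : Sym2 α → Finset α) := fun z z' h =>
  Sym2.ext fun x => by rw [← Sym2.mem_toFinset, h, Sym2.mem_toFinset]

namespace Finset

variable {V : Type*} [DecidableEq V]

theorem map_swap_eq_self {A : Finset V} {a b : V} (h : a ∈ A ↔ b ∈ A) :
    A.map (Equiv.swap a b).toEmbedding = A := by
  ext x
  rw [mem_map_equiv, Equiv.symm_swap, Equiv.swap_apply_def]
  split_ifs with hxa hxb <;> simp_all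

theorem symmDiff_map_swap {A : Finset V} {a b : V} (ha : a ∈ A) (hb : b ∉ A) :
    symmDiff A (A.map (Equiv.swap a b).toEmbedding) = {a, b} := by
  ext x
  rw [mem_symmDiff, mem_map_equiv, Equiv.symm_swap, Equiv.swap_apply_def]
  split_ifs with hxa hxb <;> simp_all

theorem sdiff_eq_singleton_of_symmDiff_eq_pair {A B : Finset V} {a b : V} (ha : a ∈ A)
    (hb : b ∈ B) (h : symmDiff A B = {a, b}) : A \ B = {a} ∧ B \ A = {b} := by
  simp only [Finset.ext_iff, mem_symmDiff, mem_insert, mem_singleton] at h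
  constructor <;> ext x <;> simp only [mem_sdiff, mem_singleton] <;> grind

end Finset

theorem Module.End.charpoly_eq_prod_of_apply_basis {K M ι : Type*} [Field K] [AddCommGroup M]
    [Module K M] [FiniteDimensional K M] [Fintype ι] [DecidableEq ι]
    (f : Module.End K M) (b : Basis ι K M) (z : ι → K) (hz : ∀ i, f (b i) = z i • b i) :
    f.charpoly = ∏ i, (X - C (z i)) := by
  have hdiag : LinearMap.toMatrix b b f = Matrix.diagonal z := by
    ext i j
    simp only [LinearMap.toMatrix_apply, hz, map_smul, Basis.repr_self, Finsupp.smul_single,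
      smul_eq_mul, mul_one, Finsupp.single_apply, Matrix.diagonal_apply]
    grind
  rw [← LinearMap.charpoly_toMatrix f b, hdiag, Matrix.charpoly_diagonal]

theorem Matrix.IsHermitian.exists_charpoly_eq_prod_of_commute {𝕜 m : Type*} [RCLike 𝕜]
    [Fintype m] [DecidableEq m] {A B : Matrix m m 𝕜} (hA : A.IsHermitian) (hB : B.IsHermitian)
    (hAB : Commute A B) :
    ∃ x y : m → 𝕜, A.charpoly = ∏ i, (X - C (x i)) ∧ B.charpoly = ∏ i, (X - C (y i)) ∧
      (A + B).charpoly = ∏ i, (X - C (x i + y i)) := by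
  have hcomm : Commute (toEuclideanLin A) (toEuclideanLin B) := by
    simp only [Commute, SemiconjBy, Module.End.mul_eq_comp, ← toLpLin_mul_same, hAB.eq]
  have hint := (isSymmetric_toEuclideanLin_iff.mpr hA).directSum_isInternal_of_commute
    (isSymmetric_toEuclideanLin_iff.mpr hB) hcomm
  let W := fun μ : 𝕜 × 𝕜 =>
    Module.End.eigenspace (toEuclideanLin A) μ.2 ⊓ Module.End.eigenspace (toEuclideanLin B) μ.1
  let b₀ := hint.collectedBasis fun μ => Module.finBasis 𝕜 (W μ)
  have : Fintype (Σ μ, Fin (finrank 𝕜 (W μ))) := FiniteDimensional.fintypeBasisIndex b₀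
  let e : (Σ μ, Fin (finrank 𝕜 (W μ))) ≃ m :=
    Fintype.equivOfCardEq (by rw [← finrank_eq_card_basis b₀, finrank_euclideanSpace])
  let b := b₀.reindex e
  have hb (i : m) : b i ∈ W (e.symm i).1 := by
    rw [Basis.reindex_apply]
    exact hint.collectedBasis_mem _ (e.symm i)
  let x i := (e.symm i).1.2
  let y i := (e.symm i).1.1
  have hx (i : m) : toEuclideanLin A (b i) = x i • b i := Module.End.mem_eigenspace_iff.mp (hb i).1
  have hy (i : m) : toEuclideanLin B (b i) = y i • b i := Module.End.mem_eigenspace_iff.mp (hb i).2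
  have hcharpoly (M : Matrix m m 𝕜) : M.charpoly = (toEuclideanLin M).charpoly := by
    rw [toEuclideanLin, toLpLin_eq_toLin, charpoly_toLin]
  refine ⟨x, y, ?_, ?_, ?_⟩
  · rw [hcharpoly, Module.End.charpoly_eq_prod_of_apply_basis _ b x hx]
  · rw [hcharpoly, Module.End.charpoly_eq_prod_of_apply_basis _ b y hy]
  · rw [hcharpoly, Module.End.charpoly_eq_prod_of_apply_basis _ b (x + y) fun i => by
      simp [hx, hy, add_smul]]
    rfl

namespace SignedGraph

section Switching

variable {V : Type*} [DecidableEq V]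

theorem token_sign_eq_prod_mul_prod {Γ : SignedGraph V} {s : V → ℤˣ}
    (hs : ∀ u v, Γ.G.Adj u v → Γ.sign u v = s u * s v) {k : ℕ}
    {A B : {A : Finset V // A.card = k}} (h : (tokenAdj Γ.G k).Adj A B) :
    (Γ.token k).sign A B = (∏ v ∈ A.1, s v) * ∏ v ∈ B.1, s v := by
  obtain ⟨a, b, ha, hb, hab, hsd⟩ := h
  obtain ⟨hAB, hBA⟩ := Finset.sdiff_eq_singleton_of_symmDiff_eq_pair ha hb hsd
  change ∏ x ∈ A.1 \ B.1, ∏ y ∈ B.1 \ A.1, Γ.sign x y = _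
  rw [← Finset.prod_inter_mul_prod_sdiff A.1 B.1, ← Finset.prod_inter_mul_prod_sdiff B.1 A.1,
    Finset.inter_comm B.1, hAB, hBA]
  simp only [Finset.prod_singleton]
  rw [hs a b hab, mul_mul_mul_comm, Int.units_mul_self, one_mul]

variable [Fintype V]

theorem diagS_mul_diagS_self (s : V → ℤˣ) : diagS s * diagS s = 1 := by
  rw [diagS, Matrix.diagonal_mul_diagonal, ← Matrix.diagonal_one]
  exact congrArg Matrix.diagonal (funext fun v => Int.cast_units_mul_self (s v))

theorem charpoly_diagS_mul_mul_diagS (s : V → ℤˣ) (M : Matrix V V ℝ) :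
    (diagS s * M * diagS s).charpoly = M.charpoly := by
  rw [Matrix.charpoly_mul_comm, ← mul_assoc, diagS_mul_diagS_self, one_mul]

theorem sign_eq_mul_of_adjMatrix_eq {Γ : SignedGraph V} [DecidableRel Γ.G.Adj] {s : V → ℤˣ}
    (h : Γ.adjMatrix = diagS s * Γ.G.adjMatrix ℝ * diagS s) (u v : V) (huv : Γ.G.Adj u v) :
    Γ.sign u v = s u * s v := by
  have := congr_fun₂ h u v
  simp only [adjMatrix, diagS, Matrix.of_apply, Matrix.mul_diagonal, Matrix.diagonal_mul,
    SimpleGraph.adjMatrix_apply, if_pos huv, mul_one] at this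
  exact_mod_cast this

theorem lapMatrix_eq_diagS_mul {Γ : SignedGraph V} [DecidableRel Γ.G.Adj] {s : V → ℤˣ}
    (hs : ∀ u v, Γ.G.Adj u v → Γ.sign u v = s u * s v) :
    Γ.lapMatrix = diagS s * Γ.G.lapMatrix ℝ * diagS s := by
  ext u v
  simp only [lapMatrix, SimpleGraph.lapMatrix, SimpleGraph.degMatrix, adjMatrix, diagS,
    Matrix.of_apply, Matrix.mul_diagonal, Matrix.diagonal_mul, Matrix.sub_apply,
    SimpleGraph.adjMatrix_apply]
  by_cases huv : u = v
  · subst huv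
    simp only [Matrix.diagonal_apply_eq, Γ.G.loopless.irrefl u, if_false, sub_zero]
    rw [mul_right_comm, Int.cast_units_mul_self, one_mul]
    -- the two degrees are computed with different `Fintype` instances on the neighbour set
    congr!
  · split_ifs with hadj
    · simp only [Matrix.diagonal_apply_ne _ huv, hs u v hadj]
      push_cast
      ring
    · simp [huv]

theorem charpoly_lapMatrix_token {Γ : SignedGraph V} {s : V → ℤˣ}
    (hs : ∀ u v, Γ.G.Adj u v → Γ.sign u v = s u * s v) (k : ℕ) :
    (Γ.token k).lapMatrix.charpoly = ((tokenAdj Γ.G k).lapMatrix ℝ).charpoly := by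
  rw [lapMatrix_eq_diagS_mul (s := fun A => ∏ v ∈ A.1, s v) fun _ _ =>
    token_sign_eq_prod_mul_prod hs, charpoly_diagS_mul_mul_diagS]
  rfl

end Switching

section TokenPerm

variable {V : Type*}

def tokenPerm (k : ℕ) : Equiv.Perm V →* Equiv.Perm {A : Finset V // A.card = k} where
  toFun π := π.finsetCongr.subtypeEquiv fun A => by simp
  map_one' := by ext A : 2; exact A.1.map_refl
  map_mul' π ρ := by ext A : 2; exact (A.1.map_map ρ.toEmbedding π.toEmbedding).symm

theorem coe_tokenPerm_apply (k : ℕ) (π : Equiv.Perm V) (A : {A : Finset V // A.card = k}) :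
    (tokenPerm k π A : Finset V) = A.1.map π.toEmbedding := rfl

end TokenPerm

section Token

variable {V : Type*} [DecidableEq V]

def tokenSwap (k : ℕ) : Sym2 V → Equiv.Perm {A : Finset V // A.card = k} :=
  Sym2.lift ⟨fun a b => tokenPerm k (Equiv.swap a b), fun a b => by simp only [Equiv.swap_comm]⟩

theorem tokenSwap_mk (k : ℕ) (a b : V) : tokenSwap k s(a, b) = tokenPerm k (Equiv.swap a b) :=
  rfl

variable {k : ℕ} {A B : {A : Finset V // A.card = k}}

theorem mem_tokenSwap_mk_apply {a b x : V} :
    x ∈ (tokenSwap k s(a, b) A).1 ↔ Equiv.swap a b x ∈ A.1 := by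
  rw [tokenSwap_mk, coe_tokenPerm_apply, Finset.mem_map_equiv, Equiv.symm_swap]

theorem tokenSwap_mk_apply_eq_self {a b : V} (h : a ∈ A.1 ↔ b ∈ A.1) :
    tokenSwap k s(a, b) A = A :=
  Subtype.ext (Finset.map_swap_eq_self h)

theorem symmDiff_tokenSwap_of_ne (e : Sym2 V) (h : tokenSwap k e A ≠ A) :
    symmDiff A.1 (tokenSwap k e A).1 = e.toFinset := by
  induction e using Sym2.ind with | _ a b => ?_
  rw [tokenSwap_mk] at h ⊢
  rw [coe_tokenPerm_apply, Sym2.toFinset_mk_eq]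
  by_cases hab : a ∈ A.1 ↔ b ∈ A.1
  · exact absurd (tokenSwap_mk_apply_eq_self hab) h
  by_cases ha : a ∈ A.1
  · exact Finset.symmDiff_map_swap ha (by tauto)
  · rw [Equiv.swap_comm, Finset.pair_comm]
    exact Finset.symmDiff_map_swap (by tauto) ha

theorem tokenSwap_mk_apply_of_symmDiff_eq {a b : V} (ha : a ∈ A.1) (hb : b ∈ B.1)
    (h : symmDiff A.1 B.1 = {a, b}) : tokenSwap k s(a, b) A = B := by
  obtain ⟨hAB, hBA⟩ := Finset.sdiff_eq_singleton_of_symmDiff_eq_pair ha hb h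
  apply Subtype.ext
  rw [tokenSwap_mk, coe_tokenPerm_apply]
  ext x
  rw [Finset.mem_map_equiv, Equiv.symm_swap, Equiv.swap_apply_def]
  simp only [Finset.ext_iff, Finset.mem_sdiff, Finset.mem_singleton] at hAB hBA
  simp only [Finset.ext_iff, Finset.mem_symmDiff, Finset.mem_insert, Finset.mem_singleton] at h
  split_ifs <;> grind

theorem tokenSwap_injOn {e e' : Sym2 V} (h : tokenSwap k e A ≠ A)
    (h' : tokenSwap k e' A = tokenSwap k e A) : e' = e :=
  Sym2.toFinset_injective <| by
    rw [← symmDiff_tokenSwap_of_ne e' (h' ▸ h), ← symmDiff_tokenSwap_of_ne e h, h']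

theorem tokenAdj_iff_exists_tokenSwap (G : SimpleGraph V) :
    (tokenAdj G k).Adj A B ↔ A ≠ B ∧ ∃ e ∈ G.edgeSet, tokenSwap k e A = B := by
  constructor
  · intro hAB
    have hne := (tokenAdj G k).ne_of_adj hAB
    obtain ⟨a, b, ha, hb, hab, h⟩ := hAB
    exact ⟨hne, s(a, b), hab, tokenSwap_mk_apply_of_symmDiff_eq ha hb h⟩
  · rintro ⟨hne, e, he, rfl⟩
    induction e using Sym2.ind with | _ a b => ?_
    have hsd := symmDiff_tokenSwap_of_ne s(a, b) hne.symm
    rw [Sym2.toFinset_mk_eq] at hsd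
    have hab : ¬(a ∈ A.1 ↔ b ∈ A.1) := fun hab => hne (tokenSwap_mk_apply_eq_self hab).symm
    rw [SimpleGraph.mem_edgeSet] at he
    by_cases ha : a ∈ A.1
    · exact ⟨a, b, ha, mem_tokenSwap_mk_apply.mpr (by simpa using ha), he, hsd⟩
    · have hb : b ∈ A.1 := by tauto
      exact ⟨b, a, hb, mem_tokenSwap_mk_apply.mpr (by simpa using hb), he.symm,
        by rw [hsd, Finset.pair_comm]⟩

theorem tokenSwap_map (π : Equiv.Perm V) (e : Sym2 V) :
    tokenSwap k (e.map π) = tokenPerm k π * tokenSwap k e * (tokenPerm k π)⁻¹ := by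
  induction e using Sym2.ind with | _ a b => ?_
  rw [Sym2.map_mk, tokenSwap_mk, tokenSwap_mk, Equiv.swap_apply_apply, map_mul, map_mul, map_inv]

variable [Fintype V]

theorem card_filter_tokenSwap_eq (G : SimpleGraph V) [DecidableRel G.Adj] (hAB : A ≠ B) :
    #{e ∈ G.edgeFinset | tokenSwap k e A = B} = if (tokenAdj G k).Adj A B then 1 else 0 := by
  split_ifs with hadj
  · obtain ⟨-, e, he, hAe⟩ := (tokenAdj_iff_exists_tokenSwap G).mp hadj
    refine Finset.card_eq_one.mpr ⟨e, Finset.eq_singleton_iff_unique_mem.mpr ⟨?_, ?_⟩⟩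
    · simpa [hAe] using he
    · intro e' he'
      rw [Finset.mem_filter] at he'
      exact tokenSwap_injOn (hAe ▸ hAB.symm) (he'.2.trans hAe.symm)
  · refine Finset.card_eq_zero.mpr (Finset.filter_eq_empty_iff.mpr fun e he hAe => hadj ?_)
    exact (tokenAdj_iff_exists_tokenSwap G).mpr ⟨hAB, e, G.mem_edgeFinset.mp he, hAe⟩

theorem degree_tokenAdj (G : SimpleGraph V) [DecidableRel G.Adj] [DecidableRel (tokenAdj G k).Adj]
    (A : {A : Finset V // A.card = k}) :
    (tokenAdj G k).degree A = #{e ∈ G.edgeFinset | tokenSwap k e A ≠ A} := by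
  rw [← SimpleGraph.card_neighborFinset_eq_degree]
  symm
  refine Finset.card_bij (fun e _ => tokenSwap k e A) ?_ ?_ ?_
  · intro e he
    rw [Finset.mem_filter, SimpleGraph.mem_edgeFinset] at he
    rw [SimpleGraph.mem_neighborFinset, tokenAdj_iff_exists_tokenSwap]
    exact ⟨Ne.symm he.2, e, he.1, rfl⟩
  · intro e he e' _ h
    exact tokenSwap_injOn (Finset.mem_filter.mp he).2 h.symm |>.symm
  · intro B hB
    rw [SimpleGraph.mem_neighborFinset, tokenAdj_iff_exists_tokenSwap] at hB
    obtain ⟨hne, e, he, rfl⟩ := hB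
    exact ⟨e, Finset.mem_filter.mpr ⟨G.mem_edgeFinset.mpr he, Ne.symm hne⟩, rfl⟩

theorem lapMatrix_tokenAdj_eq_sum (G : SimpleGraph V) [DecidableRel G.Adj]
    [DecidableRel (tokenAdj G k).Adj] :
    (tokenAdj G k).lapMatrix ℝ = ∑ e ∈ G.edgeFinset, (1 - (tokenSwap k e).permMatrix ℝ) := by
  ext A B
  simp only [SimpleGraph.lapMatrix, SimpleGraph.degMatrix, SimpleGraph.adjMatrix_apply,
    Matrix.sub_apply, Matrix.sum_apply, Matrix.one_apply, PEquiv.toMatrix_apply,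
    Equiv.toPEquiv_apply, Option.mem_def, Option.some.injEq, Finset.sum_sub_distrib,
    Finset.sum_boole]
  by_cases hAB : A = B
  · subst hAB
    simp only [Matrix.diagonal_apply_eq, SimpleGraph.irrefl, if_false, sub_zero,
      Finset.filter_true, degree_tokenAdj]
    rw [eq_sub_iff_add_eq, ← Nat.cast_add, add_comm, Finset.card_filter_add_card_filter_not]
  · simp [hAB, card_filter_tokenSwap_eq G hAB]

theorem commute_permMatrix_tokenPerm_lapMatrix_top (π : Equiv.Perm V) :
    Commute ((tokenPerm k π).permMatrix ℝ) ((tokenAdj ⊤ k).lapMatrix ℝ) := by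
  rw [lapMatrix_tokenAdj_eq_sum, Finset.sum_sub_distrib]
  refine (Commute.sum_right _ _ _ fun _ _ => Commute.one_right _).sub_right ?_
  simp only [Commute, SemiconjBy, Finset.mul_sum, Finset.sum_mul, ← Matrix.permMatrix_mul]
  refine Finset.sum_nbij' (Sym2.map π.symm) (Sym2.map π) ?_ ?_ ?_ ?_ fun e _ => ?_
  · simp [Sym2.isDiag_map (Equiv.injective _)]
  · simp [Sym2.isDiag_map (Equiv.injective _)]
  · intro e _; simp [Sym2.map_map]
  · intro e _; simp [Sym2.map_map]
  · rw [tokenSwap_map, ← Equiv.Perm.inv_def, map_inv, inv_inv]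
    group

theorem lapMatrix_tokenAdj_add_compl (G : SimpleGraph V) [DecidableRel G.Adj] :
    (tokenAdj G k).lapMatrix ℝ + (tokenAdj Gᶜ k).lapMatrix ℝ = (tokenAdj ⊤ k).lapMatrix ℝ := by
  have hE : (⊤ : SimpleGraph V).edgeFinset = G.edgeFinset ∪ Gᶜ.edgeFinset := by
    ext e
    rw [Finset.mem_union, SimpleGraph.mem_edgeFinset, SimpleGraph.mem_edgeFinset,
      SimpleGraph.mem_edgeFinset, ← Set.mem_union, ← SimpleGraph.edgeSet_sup, sup_compl_eq_top]
  rw [lapMatrix_tokenAdj_eq_sum, lapMatrix_tokenAdj_eq_sum, lapMatrix_tokenAdj_eq_sum, hE,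
    Finset.sum_union (SimpleGraph.disjoint_edgeFinset.mpr disjoint_compl_right)]

theorem commute_lapMatrix_tokenAdj_compl (G : SimpleGraph V) [DecidableRel G.Adj] :
    Commute ((tokenAdj G k).lapMatrix ℝ) ((tokenAdj Gᶜ k).lapMatrix ℝ) := by
  have hG : Commute ((tokenAdj G k).lapMatrix ℝ) ((tokenAdj ⊤ k).lapMatrix ℝ) := by
    rw [lapMatrix_tokenAdj_eq_sum G]
    refine Commute.sum_left _ _ _ fun e _ => (Commute.one_left _).sub_left ?_
    induction e using Sym2.ind with | _ a b => exact commute_permMatrix_tokenPerm_lapMatrix_top _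
  rw [← lapMatrix_tokenAdj_add_compl G] at hG
  simpa using hG.sub_right (Commute.refl _)

end Token

end SignedGraph

theorem token_complement_johnson_eigenvalues_general {V : Type*} [Fintype V] [DecidableEq V]
    (n k N : ℕ) (hn : Fintype.card V = n)
    (hN : N = n.choose k)
    (Γ : SignedGraph V) (s : V → ℤˣ)
    (hS : Γ.adjMatrix = SignedGraph.diagS s * Γ.G.adjMatrix ℝ * SignedGraph.diagS s) :
    ∃ (x y : Fin N → ℝ),
      (Γ.token k).lapMatrix.charpoly = ∏ i, (Polynomial.X - Polynomial.C (x i)) ∧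
      ((Γ.scompl s).token k).lapMatrix.charpoly
        = ∏ i, (Polynomial.X - Polynomial.C (y i)) ∧
      ((allPos V).token k).lapMatrix.charpoly
        = ∏ i, (Polynomial.X - Polynomial.C (x i + y i)) := by
  have hΓ := SignedGraph.charpoly_lapMatrix_token (SignedGraph.sign_eq_mul_of_adjMatrix_eq hS) k
  have hΓc := SignedGraph.charpoly_lapMatrix_token (Γ := Γ.scompl s) (fun _ _ _ => rfl) k
  have hK := SignedGraph.charpoly_lapMatrix_token (Γ := allPos V) (s := 1)
    (fun _ _ _ => (mul_one 1).symm) k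
  obtain ⟨x, y, hx, hy, hxy⟩ := Matrix.IsHermitian.exists_charpoly_eq_prod_of_commute
    (SimpleGraph.isHermitian_lapMatrix _ _) (SimpleGraph.isHermitian_lapMatrix _ _)
    (SignedGraph.commute_lapMatrix_tokenAdj_compl (k := k) Γ.G)
  rw [SignedGraph.lapMatrix_tokenAdj_add_compl] at hxy
  let e : Fin N ≃ {A : Finset V // A.card = k} :=
    (Fintype.equivFinOfCardEq (by rw [Fintype.card_finset_len, hn, hN])).symm
  refine ⟨x ∘ e, y ∘ e, ?_, ?_, ?_⟩
  · rw [hΓ]; exact hx.trans (e.prod_comp _).symm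
  · rw [hΓc]; exact hy.trans (e.prod_comp _).symm
  · rw [hK]; exact hxy.trans (e.prod_comp _).symm

/-- there are enumerations `x`, `y` of the Laplacian eigenvalues of
`F_k(Γ)` and `F_k(Γ̄_σ)` (with multiplicity) such that `x_i + y_i` enumerates the Laplacian
eigenvalues of the Johnson graph `J(n, k) = F_k(K_n)` (with multiplicity). -/
theorem token_complement_johnson_eigenvalues {V : Type*} [Fintype V] [DecidableEq V]
    (n k N : ℕ) (hn : Fintype.card V = n) (hk1 : 1 ≤ k) (hk2 : k ≤ n - 1)
    (hN : N = n.choose k)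
    (Γ : SignedGraph V) (hbal : Γ.Balanced) (s : V → ℤˣ)
    (hS : Γ.adjMatrix = SignedGraph.diagS s * Γ.G.adjMatrix ℝ * SignedGraph.diagS s) :
    ∃ (x y : Fin N → ℝ),
      (Γ.token k).lapMatrix.charpoly = ∏ i, (Polynomial.X - Polynomial.C (x i)) ∧
      ((Γ.scompl s).token k).lapMatrix.charpoly
        = ∏ i, (Polynomial.X - Polynomial.C (y i)) ∧
      ((allPos V).token k).lapMatrix.charpoly
        = ∏ i, (Polynomial.X - Polynomial.C (x i + y i)) :=
  token_complement_johnson_eigenvalues_general n k N hn hN Γ s hS
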